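/- The digit-reversal action ψ of (ℚ_p,+) on ℤ_p² is free: if ψ(g,(x,y)) = (x,y) for some (x,y) ∈ ℤ_p², then g = 0. -/

import Mathlib

/-!
Write `g = z + a / p ^ n` with `z ∈ ℤ_p` and `0 ≤ a < p ^ n`. The second coordinate of
`ψ(g, (x, y))` replaces the lowest `n` digits `b` of `y` by the reversal of `c = a + rev b`
(reduced mod `p ^ n`), so at a fixed point `rev c = b`. Since digit reversal is an involution
on `[0, p ^ n)`, this forces `c = rev b`, hence `a = 0` and no carry occurs; the first
coordinate then gives `z = 0`.
-/

open scoped Classical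

/-- Reversal of the base-`p` digit string of length `n`. -/
def rev (p n a : ℕ) : ℕ := ∑ i ∈ Finset.range n, (a / p ^ (n - 1 - i) % p) * p ^ i

/-- The result of applying the digit-reversal map, given the decomposition
`g = z + a / p^n` of the acting group element. -/
noncomputable def psiOut (p : ℕ) [Fact p.Prime] (n : ℕ) (z : ℤ_[p]) (a : ℕ)
    (m : ℤ_[p] × ℤ_[p]) : ℤ_[p] × ℤ_[p] :=
  let b := m.2.appr n
  let c := a + rev p n b
  if c < p ^ n then (m.1 + z, m.2 - (b : ℤ_[p]) + (rev p n c : ℤ_[p]))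
  else (m.1 + z + 1, m.2 - (b : ℤ_[p]) + (rev p n (c - p ^ n) : ℤ_[p]))

/-- The digit-reversal action of `(ℚ_p, +)` on `ℤ_p²`. -/
noncomputable def psi (p : ℕ) [Fact p.Prime] (g : ℚ_[p]) (m : ℤ_[p] × ℤ_[p]) :
    ℤ_[p] × ℤ_[p] :=
  if h : ∃ n : ℕ, ∃ z : ℤ_[p], ∃ a : ℕ, a < p ^ n ∧
      g = (z : ℚ_[p]) + (a : ℚ_[p]) / (p : ℚ_[p]) ^ n then
    psiOut p h.choose h.choose_spec.choose h.choose_spec.choose_spec.choose m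
  else m

open Finset

namespace Nat

variable {p : ℕ}

theorem sum_mul_pow_lt {e : ℕ → ℕ} (he : ∀ i, e i < p) (n : ℕ) :
    ∑ i ∈ range n, e i * p ^ i < p ^ n := by
  induction n with
  | zero => simp
  | succ n ih =>
    calc ∑ i ∈ range (n + 1), e i * p ^ i
        < p ^ n + e n * p ^ n := by rw [sum_range_succ]; omega
      _ = (e n + 1) * p ^ n := by ring
      _ ≤ p ^ (n + 1) := by rw [pow_succ']; exact Nat.mul_le_mul_right _ (he n)

theorem sum_mul_pow_div_pow_mod {e : ℕ → ℕ} (he : ∀ i, e i < p) {n j : ℕ} (hj : j < n) :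
    (∑ i ∈ range n, e i * p ^ i) / p ^ j % p = e j := by
  have hp : 0 < p := Nat.zero_lt_of_lt (he 0)
  induction n generalizing e j with
  | zero => omega
  | succ n ih =>
    have hsplit : ∑ i ∈ range (n + 1), e i * p ^ i
        = e 0 + p * ∑ i ∈ range n, e (i + 1) * p ^ i := by
      rw [sum_range_succ', mul_sum]
      simp only [pow_succ', pow_zero, mul_one]
      rw [add_comm]
      congr 1
      exact sum_congr rfl fun i _ => by ring
    rw [hsplit]
    cases j with
    | zero => simp [Nat.add_mul_mod_self_left, Nat.mod_eq_of_lt (he 0)]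
    | succ j =>
      rw [pow_succ', ← Nat.div_div_eq_div_mul, Nat.add_mul_div_left _ _ hp,
        Nat.div_eq_of_lt (he 0), zero_add]
      exact ih (fun i => he (i + 1)) (by omega)

theorem sum_div_pow_mod_mul_pow (hp : 0 < p) {n a : ℕ} (ha : a < p ^ n) :
    ∑ i ∈ range n, a / p ^ i % p * p ^ i = a := by
  induction n generalizing a with
  | zero => simp_all
  | succ n ih =>
    have hdiv : a / p < p ^ n := by
      rw [Nat.div_lt_iff_lt_mul hp, ← pow_succ]; exact ha
    have hshift : ∑ i ∈ range n, a / p ^ (i + 1) % p * p ^ (i + 1)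
        = p * ∑ i ∈ range n, a / p / p ^ i % p * p ^ i := by
      rw [mul_sum]
      exact sum_congr rfl fun i _ => by rw [pow_succ', ← Nat.div_div_eq_div_mul]; ring
    rw [sum_range_succ', hshift, ih hdiv, pow_zero, Nat.div_one, mul_one, add_comm]
    exact Nat.mod_add_div a p

end Nat

section rev

variable {p : ℕ} (hp : 0 < p) (n : ℕ)
include hp

theorem rev_lt (a : ℕ) : rev p n a < p ^ n :=
  Nat.sum_mul_pow_lt (fun _ => Nat.mod_lt _ hp) n

theorem rev_rev {a : ℕ} (ha : a < p ^ n) : rev p n (rev p n a) = a := by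
  have hdigit : ∀ j < n, rev p n a / p ^ j % p = a / p ^ (n - 1 - j) % p := fun j hj =>
    Nat.sum_mul_pow_div_pow_mod (fun _ => Nat.mod_lt _ hp) hj
  calc rev p n (rev p n a)
      = ∑ i ∈ range n, a / p ^ i % p * p ^ i := by
        refine sum_congr rfl fun i hi => ?_
        rw [mem_range] at hi
        rw [hdigit _ (by omega), show n - 1 - (n - 1 - i) = i by omega]
    _ = a := Nat.sum_div_pow_mod_mul_pow hp ha

end rev

theorem Padic.exists_eq_add_div_pow (p : ℕ) [Fact p.Prime] (g : ℚ_[p]) :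
    ∃ n : ℕ, ∃ z : ℤ_[p], ∃ a : ℕ, a < p ^ n ∧
      g = (z : ℚ_[p]) + (a : ℚ_[p]) / (p : ℚ_[p]) ^ n := by
  have hp : (1 : ℝ) < p := mod_cast (Fact.out : p.Prime).one_lt
  obtain ⟨n, hn⟩ := pow_unbounded_of_one_lt ‖g‖ hp
  have hpn : (p : ℚ_[p]) ^ n ≠ 0 := pow_ne_zero _ (mod_cast (Fact.out : p.Prime).ne_zero)
  have hw : ‖g * (p : ℚ_[p]) ^ n‖ ≤ 1 := by
    rw [norm_mul, norm_pow, Padic.norm_p, inv_pow, ← div_eq_mul_inv,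
      div_le_one (pow_pos (one_pos.trans hp) n)]
    exact hn.le
  set w : ℤ_[p] := ⟨g * (p : ℚ_[p]) ^ n, hw⟩
  obtain ⟨z, hz⟩ := Ideal.mem_span_singleton.mp (PadicInt.appr_spec n w)
  refine ⟨n, z, w.appr n, PadicInt.appr_lt w n, ?_⟩
  have hzq := congrArg ((↑) : ℤ_[p] → ℚ_[p]) hz
  push_cast at hzq
  field_simp
  linear_combination hzq

theorem psiOut_eq_self {p : ℕ} [Fact p.Prime] {n : ℕ} {z : ℤ_[p]} {a : ℕ} {m : ℤ_[p] × ℤ_[p]}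
    (ha : a < p ^ n) (h : psiOut p n z a m = m) : z = 0 ∧ a = 0 := by
  have hp := (Fact.out : p.Prime).pos
  simp only [psiOut] at h
  set b := m.2.appr n
  have eq_rev_of_fixed : ∀ c < p ^ n, m.2 - b + (rev p n c : ℤ_[p]) = m.2 → c = rev p n b := by
    intro c hc hfix
    have hcb : rev p n c = b := by
      exact_mod_cast (by linear_combination hfix : (rev p n c : ℤ_[p]) = b)
    rw [← hcb, rev_rev hp n hc]
  have hb := rev_lt hp n b
  split_ifs at h with hcarry
  · have hc := eq_rev_of_fixed _ hcarry (congrArg Prod.snd h)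
    exact ⟨add_eq_left.mp (congrArg Prod.fst h), by omega⟩
  · have hc := eq_rev_of_fixed _ (by omega) (congrArg Prod.snd h)
    omega

/-- The digit-reversal action of `(ℚ_p, +)` on `ℤ_p²` is free. -/
theorem psi_free (p : ℕ) [Fact p.Prime] (g : ℚ_[p]) (m : ℤ_[p] × ℤ_[p])
    (h : psi p g m = m) : g = 0 := by
  have hex := Padic.exists_eq_add_div_pow p g
  rw [psi, dif_pos hex] at h
  obtain ⟨ha, hg⟩ := hex.choose_spec.choose_spec.choose_spec
  obtain ⟨hz, ha⟩ := psiOut_eq_self ha h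
  rw [hg, ha, hz]
  simp
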